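/- arXiv:1809.10078 — 4 statements merged into one kernel-verified Lean document; each statement's English description precedes it below -/
import Mathlib

section
/- Let R₁, …, Rₙ be nonempty subsets of ℝ². There exists a nonempty compact convex set K ⊆ ℝ² whose topological frontier intersects every Rᵢ if and only if there exist points q₁, …, qₙ with qᵢ ∈ Rᵢ for every i such that the set {q₁, …, qₙ} is in weakly convex position, i.e., for every i there is a closed halfplane containing all of q₁, …, qₙ whose boundary line passes through qᵢ. -/
/-!
A point `x` of a closed convex set `K` in a finite-dimensional space lies on its frontier exactly
when some nonzero linear form attains its maximum over `K` at `x`. If `K` has interior, such a form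
comes from separating `x` from the interior (Hahn–Banach); otherwise `K` lies in a proper affine
subspace and any form vanishing on its direction is constant on `K`. Conversely a nonzero linear
form has no local maximum, so its maximiser is not interior. Hence points of `frontier K` chosen in
the `R i` are in weakly convex position, and a weakly convex selection lies on the frontier of its
own convex hull.
-/

open Set

section Support

variable {E : Type*} [NormedAddCommGroup E] [NormedSpace ℝ E]

theorem notMem_interior_of_forall_le {K : Set E} {x : E} {f : StrongDual ℝ E} (hf : f ≠ 0)
    (hle : ∀ y ∈ K, f y ≤ f x) : x ∉ interior K := fun hx ↦
  hf <| IsLocalMax.hasFDerivAt_eq_zero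
    (Filter.mem_of_superset (mem_interior_iff_mem_nhds.1 hx) hle) f.hasFDerivAt

variable [FiniteDimensional ℝ E]

theorem Convex.exists_forall_eq_of_interior_eq_empty {K : Set E} (hK : Convex ℝ K)
    (hint : interior K = ∅) {x : E} (hx : x ∈ K) :
    ∃ f : StrongDual ℝ E, f ≠ 0 ∧ ∀ y ∈ K, f y = f x := by
  have hspan : affineSpan ℝ K ≠ ⊤ := by
    rw [ne_eq, ← hK.interior_nonempty_iff_affineSpan_eq_top, hint]
    exact not_nonempty_empty
  have hdir : (affineSpan ℝ K).direction < ⊤ := by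
    rw [lt_top_iff_ne_top]
    exact fun h ↦ hspan <|
      (AffineSubspace.direction_eq_top_iff_of_nonempty ⟨x, subset_affineSpan ℝ K hx⟩).1 h
  obtain ⟨f, hf, hker⟩ := (affineSpan ℝ K).direction.exists_le_ker_of_lt_top hdir
  refine ⟨LinearMap.toContinuousLinearMap f, by simpa using hf, fun y hy ↦ ?_⟩
  have hyx : y - x ∈ LinearMap.ker f :=
    hker <| AffineSubspace.vsub_mem_direction (subset_affineSpan ℝ K hy)
      (subset_affineSpan ℝ K hx)
  simpa [sub_eq_zero] using hyx

theorem Convex.exists_forall_le_of_notMem_interior {K : Set E} (hK : Convex ℝ K) {x : E}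
    (hxK : x ∈ K) (hx : x ∉ interior K) :
    ∃ f : StrongDual ℝ E, f ≠ 0 ∧ ∀ y ∈ K, f y ≤ f x := by
  rcases (interior K).eq_empty_or_nonempty with hint | hint
  · obtain ⟨f, hf, heq⟩ := hK.exists_forall_eq_of_interior_eq_empty hint hxK
    exact ⟨f, hf, fun y hy ↦ (heq y hy).le⟩
  · obtain ⟨f, u, hf, hfK, hfx⟩ := geometric_hahn_banach_of_nonempty_interior hK
      (convex_singleton x) (disjoint_singleton_right.2 hx) hint (singleton_nonempty x)
    exact ⟨f, hf, fun y hy ↦ (hfK y hy).trans (hfx x rfl)⟩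

theorem Convex.mem_frontier_iff_exists_forall_le {K : Set E} (hK : Convex ℝ K)
    (hKc : IsClosed K) {x : E} (hx : x ∈ K) :
    x ∈ frontier K ↔ ∃ f : StrongDual ℝ E, f ≠ 0 ∧ ∀ y ∈ K, f y ≤ f x := by
  rw [hKc.frontier_eq, mem_sdiff, and_iff_right hx]
  exact ⟨hK.exists_forall_le_of_notMem_interior hx,
    fun ⟨_, hf, hle⟩ ↦ notMem_interior_of_forall_le hf hle⟩

end Support

noncomputable def dotCLM (a : ℝ × ℝ) : StrongDual ℝ (ℝ × ℝ) :=
  a.1 • ContinuousLinearMap.fst ℝ ℝ ℝ + a.2 • ContinuousLinearMap.snd ℝ ℝ ℝ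

@[simp]
theorem dotCLM_apply (a p : ℝ × ℝ) : dotCLM a p = a.1 * p.1 + a.2 * p.2 := rfl

theorem dotCLM_eq_zero_iff {a : ℝ × ℝ} : dotCLM a = 0 ↔ a = 0 := by
  refine ⟨fun h ↦ ?_, fun h ↦ by ext <;> simp [h]⟩
  ext
  · simpa using congrArg (· (1, 0)) h
  · simpa using congrArg (· (0, 1)) h

theorem dotCLM_surjective : Function.Surjective dotCLM := fun f ↦
  ⟨(f (1, 0), f (0, 1)), by ext <;> simp⟩

theorem Convex.mem_frontier_iff_exists_halfplane {K : Set (ℝ × ℝ)} (hK : Convex ℝ K)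
    (hKc : IsClosed K) {x : ℝ × ℝ} (hx : x ∈ K) :
    x ∈ frontier K ↔
      ∃ a : ℝ × ℝ, a ≠ 0 ∧ ∀ y ∈ K, a.1 * y.1 + a.2 * y.2 ≤ a.1 * x.1 + a.2 * x.2 := by
  simp only [hK.mem_frontier_iff_exists_forall_le hKc hx, dotCLM_surjective.exists, ne_eq,
    dotCLM_eq_zero_iff, dotCLM_apply]

theorem convex_body_frontier_transversal_iff_weakly_convex_selection_general
    (n : ℕ) (R : Fin n → Set (ℝ × ℝ)) :
    (∃ K : Set (ℝ × ℝ), K.Nonempty ∧ IsCompact K ∧ Convex ℝ K ∧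
      ∀ i, (frontier K ∩ R i).Nonempty) ↔
    (∃ q : Fin n → ℝ × ℝ, (∀ i, q i ∈ R i) ∧
      ∀ i, ∃ a : ℝ × ℝ, ∃ c : ℝ, a ≠ 0 ∧
        (∀ j, a.1 * (q j).1 + a.2 * (q j).2 ≤ c) ∧
        a.1 * (q i).1 + a.2 * (q i).2 = c) := by
  constructor
  · rintro ⟨K, -, hKc, hK, hKR⟩
    choose q hqF hqR using hKR
    have hqK (i : Fin n) : q i ∈ K := hKc.isClosed.frontier_subset (hqF i)
    refine ⟨q, hqR, fun i ↦ ?_⟩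
    obtain ⟨a, ha, hle⟩ :=
      (hK.mem_frontier_iff_exists_halfplane hKc.isClosed (hqK i)).1 (hqF i)
    exact ⟨a, _, ha, fun j ↦ hle _ (hqK j), rfl⟩
  · rintro ⟨q, hqR, hq⟩
    cases isEmpty_or_nonempty (Fin n)
    · exact ⟨{0}, singleton_nonempty 0, isCompact_singleton, convex_singleton 0, isEmptyElim⟩
    have hKc : IsCompact (convexHull ℝ (range q)) :=
      (finite_range q).isCompact_convexHull (𝕜 := ℝ)
    have hqK (i : Fin n) : q i ∈ convexHull ℝ (range q) :=
      subset_convexHull ℝ _ (mem_range_self i)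
    refine ⟨_, (range_nonempty q).convexHull, hKc, convex_convexHull ℝ _,
      fun i ↦ ⟨q i, ?_, hqR i⟩⟩
    obtain ⟨a, c, ha, hle, rfl⟩ := hq i
    refine ((convex_convexHull ℝ _).mem_frontier_iff_exists_halfplane hKc.isClosed (hqK i)).2
      ⟨a, ha, fun y hy ↦ ?_⟩
    have hhull : convexHull ℝ (range q) ⊆ {y | dotCLM a y ≤ dotCLM a (q i)} :=
      convexHull_min (range_subset_iff.2 hle)
        (convex_halfSpace_le (dotCLM a).toLinearMap.isLinear _)
    simpa using hhull hy

/-- For nonempty regions `R 0, …, R (n-1) ⊆ ℝ²`, there exists a nonempty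
compact convex set whose topological frontier meets every region iff one can pick
`q i ∈ R i` such that the points `q 0, …, q (n-1)` are in weakly convex position,
i.e. every `q i` lies on the boundary line of some closed halfplane containing all
the chosen points. -/
theorem convex_body_frontier_transversal_iff_weakly_convex_selection
    (n : ℕ) (R : Fin n → Set (ℝ × ℝ)) (hne : ∀ i, (R i).Nonempty) :
    (∃ K : Set (ℝ × ℝ), K.Nonempty ∧ IsCompact K ∧ Convex ℝ K ∧
      ∀ i, (frontier K ∩ R i).Nonempty) ↔
    (∃ q : Fin n → ℝ × ℝ, (∀ i, q i ∈ R i) ∧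
      ∀ i, ∃ a : ℝ × ℝ, ∃ c : ℝ, a ≠ 0 ∧
        (∀ j, a.1 * (q j).1 + a.2 * (q j).2 ≤ c) ∧
        a.1 * (q i).1 + a.2 * (q i).2 = c) :=
  convex_body_frontier_transversal_iff_weakly_convex_selection_general n R
end

section
/- Let 𝓡 be a finite set of closed vertical line segments in ℝ² in general position, and let U be an upper convex transversal of 𝓡 that visits k regions. Then there exists an upper convex transversal U′ of 𝓡 that visits exactly the same k regions of 𝓡 as U, and such that the leftmost vertex, the rightmost vertex, and every strictly convex vertex of U′ is the bottom endpoint of a segment of 𝓡. -/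
/-- A closed vertical line segment in the plane, with abscissa `x` and ordinates
ranging over `[lo, hi]`. -/
structure VSeg where
  x : ℝ
  lo : ℝ
  hi : ℝ
  le : lo ≤ hi

namespace VSeg

/-- The set of points of a vertical segment. -/
def carrier (s : VSeg) : Set (ℝ × ℝ) := {p | p.1 = s.x ∧ s.lo ≤ p.2 ∧ p.2 ≤ s.hi}

/-- The bottom endpoint of a vertical segment. -/
def bot (s : VSeg) : ℝ × ℝ := (s.x, s.lo)

/-- The top endpoint of a vertical segment. -/
def top (s : VSeg) : ℝ × ℝ := (s.x, s.hi)

end VSeg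

/-- The set of all endpoints of the segments of `R`. -/
def endpointsOf (R : Finset VSeg) : Set (ℝ × ℝ) := ⋃ s ∈ R, {VSeg.bot s, VSeg.top s}

/-- General position: no three (distinct) segment endpoints are collinear. -/
def GenPos (R : Finset VSeg) : Prop :=
  ∀ p q r : ℝ × ℝ, p ∈ endpointsOf R → q ∈ endpointsOf R → r ∈ endpointsOf R →
    p ≠ q → p ≠ r → q ≠ r → ¬ Collinear ℝ ({p, q, r} : Set (ℝ × ℝ))

/-- The slope of the line through two points (with distinct abscissae). -/
noncomputable def ptSlope (a b : ℝ × ℝ) : ℝ := (b.2 - a.2) / (b.1 - a.1)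

/-- An upper convex transversal of `R` with `k` points: a weakly concave chain
`pts 0, …, pts (k-1)` with strictly increasing `x`-coordinates and non-increasing
consecutive edge slopes, together with an injective assignment `seg` of each point
to a segment of `R` containing it. -/
structure UpperTransversal (R : Finset VSeg) (k : ℕ) where
  pts : Fin k → ℝ × ℝ
  seg : Fin k → VSeg
  seg_mem : ∀ i, seg i ∈ R
  seg_inj : Function.Injective seg
  pt_mem : ∀ i, pts i ∈ (seg i).carrier
  x_mono : StrictMono fun i => (pts i).1
  concave : ∀ i : ℕ, ∀ h : i + 2 < k,
    ptSlope (pts ⟨i, by omega⟩) (pts ⟨i + 1, by omega⟩) ≥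
      ptSlope (pts ⟨i + 1, by omega⟩) (pts ⟨i + 2, h⟩)

/-!
Keep the segments visited by `U` and their order, and only move the points along their
segments. The admissible height profiles (one height per segment, within the segment, with
every vertex on or above the chord of its two neighbours) are closed under pointwise infima,
because the chord height is monotone in the heights of its ends. So there is a lowest
admissible profile. In it, a vertex that is not supported by a chord of its neighbours (an end
vertex, or a strictly convex one) could be lowered without breaking admissibility unless it
already sits at the bottom endpoint of its segment.
-/

/-- The height at abscissa `t` of the line through `a` and `c`. -/
noncomputable def chordHeight (a c : ℝ × ℝ) (t : ℝ) : ℝ :=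
  ((c.1 - t) * a.2 + (t - a.1) * c.2) / (c.1 - a.1)

theorem ptSlope_le_ptSlope_iff {a b c : ℝ × ℝ} (hab : a.1 < b.1) (hbc : b.1 < c.1) :
    ptSlope b c ≤ ptSlope a b ↔ chordHeight a c b.1 ≤ b.2 := by
  unfold ptSlope chordHeight
  rw [div_le_div_iff₀ (by linarith) (by linarith), div_le_iff₀ (by linarith)]
  constructor <;> intro h <;> nlinarith

theorem collinear_of_chordHeight_eq {a b c : ℝ × ℝ} (hac : a.1 ≠ c.1)
    (h : chordHeight a c b.1 = b.2) : Collinear ℝ ({a, b, c} : Set (ℝ × ℝ)) := by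
  rw [Set.insert_comm]
  apply collinear_insert_of_mem_affineSpan_pair
  have hca : c.1 - a.1 ≠ 0 := sub_ne_zero.mpr hac.symm
  convert AffineMap.lineMap_mem_affineSpan_pair ((b.1 - a.1) / (c.1 - a.1)) a c
  unfold chordHeight at h
  rw [div_eq_iff hca] at h
  ext <;> simp [AffineMap.lineMap_apply] <;> field_simp <;> linarith

theorem chordHeight_mono {a c : ℝ × ℝ} {t ya yc : ℝ} (hat : a.1 ≤ t) (htc : t ≤ c.1)
    (ha : ya ≤ a.2) (hc : yc ≤ c.2) :
    chordHeight (a.1, ya) (c.1, yc) t ≤ chordHeight a c t := by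
  unfold chordHeight
  gcongr ?_ / ?_
  · linarith
  · exact add_le_add (mul_le_mul_of_nonneg_left ha (by linarith))
      (mul_le_mul_of_nonneg_left hc (by linarith))

section HeightProfile

variable {k : ℕ} (s : Fin k → VSeg)

def segPoint (y : Fin k → ℝ) (i : Fin k) : ℝ × ℝ := ((s i).x, y i)

/-- The chord from vertex `j` to vertex `j + 2`, evaluated above the middle segment `j + 1`. -/
noncomputable def chordAt (y : Fin k → ℝ) (j : ℕ) (h : j + 2 < k) : ℝ :=
  chordHeight (segPoint s y ⟨j, by omega⟩) (segPoint s y ⟨j + 2, h⟩) (s ⟨j + 1, by omega⟩).x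

def AdmissibleHeights (y : Fin k → ℝ) : Prop :=
  (∀ i, y i ∈ Set.Icc (s i).lo (s i).hi) ∧
    ∀ j (h : j + 2 < k), chordAt s y j h ≤ y ⟨j + 1, by omega⟩

noncomputable def lowestHeights (i : Fin k) : ℝ :=
  sInf ((fun y => y i) '' {y | AdmissibleHeights s y})

variable {s}

theorem chordAt_mono (hs : Monotone fun i => (s i).x) {y y' : Fin k → ℝ} (hy : y' ≤ y)
    (j : ℕ) (h : j + 2 < k) : chordAt s y' j h ≤ chordAt s y j h :=
  chordHeight_mono (a := segPoint s y ⟨j, by omega⟩) (c := segPoint s y ⟨j + 2, h⟩)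
    (hs (Fin.mk_le_mk.mpr (by omega))) (hs (Fin.mk_le_mk.mpr (by omega))) (hy _) (hy _)

theorem bddBelow_heights (i : Fin k) : BddBelow ((fun y => y i) '' {y | AdmissibleHeights s y}) :=
  ⟨(s i).lo, by rintro _ ⟨y, hy, rfl⟩; exact (hy.1 i).1⟩

theorem lowestHeights_le {y : Fin k → ℝ} (hy : AdmissibleHeights s y) (i : Fin k) :
    lowestHeights s i ≤ y i :=
  csInf_le (bddBelow_heights i) ⟨y, hy, rfl⟩

theorem le_lowestHeights {y₀ : Fin k → ℝ} (hy₀ : AdmissibleHeights s y₀) {i : Fin k} {b : ℝ}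
    (hb : ∀ y, AdmissibleHeights s y → b ≤ y i) : b ≤ lowestHeights s i :=
  le_csInf ⟨y₀ i, y₀, hy₀, rfl⟩ (by rintro _ ⟨y, hy, rfl⟩; exact hb y hy)

theorem admissibleHeights_lowestHeights (hs : Monotone fun i => (s i).x) {y₀ : Fin k → ℝ}
    (hy₀ : AdmissibleHeights s y₀) : AdmissibleHeights s (lowestHeights s) := by
  refine ⟨fun i => ⟨le_lowestHeights hy₀ fun y hy => (hy.1 i).1,
    (lowestHeights_le hy₀ i).trans (hy₀.1 i).2⟩, fun j h => le_lowestHeights hy₀ fun y hy => ?_⟩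
  calc chordAt s (lowestHeights s) j h ≤ chordAt s y j h :=
        chordAt_mono hs (lowestHeights_le hy) j h
    _ ≤ y ⟨j + 1, _⟩ := hy.2 j h

theorem AdmissibleHeights.update (hs : Monotone fun i => (s i).x) {y : Fin k → ℝ}
    (hy : AdmissibleHeights s y) {i : Fin k} {v : ℝ} (hv : v ∈ Set.Icc (s i).lo (y i))
    (hchord : ∀ j (h : j + 2 < k), (⟨j + 1, by omega⟩ : Fin k) = i → chordAt s y j h ≤ v) :
    AdmissibleHeights s (Function.update y i v) := by
  have hle : Function.update y i v ≤ y := by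
    intro m
    rcases eq_or_ne m i with rfl | hm
    · simpa using hv.2
    · simp [hm]
  refine ⟨fun m => ?_, fun j h => (chordAt_mono hs hle j h).trans ?_⟩
  · rcases eq_or_ne m i with rfl | hm
    · simpa using ⟨hv.1, hv.2.trans (hy.1 m).2⟩
    · simpa [hm] using hy.1 m
  · rcases eq_or_ne (⟨j + 1, by omega⟩ : Fin k) i with hji | hji
    · simpa [hji] using hchord j h hji
    · simpa [hji] using hy.2 j h

/-- Otherwise the vertex `i` could be lowered to `max lo c`. -/
theorem lowestHeights_eq_lo (hs : Monotone fun i => (s i).x) {y₀ : Fin k → ℝ}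
    (hy₀ : AdmissibleHeights s y₀) {i : Fin k} {c : ℝ} (hc : c < lowestHeights s i)
    (hchord : ∀ j (h : j + 2 < k), (⟨j + 1, by omega⟩ : Fin k) = i →
      chordAt s (lowestHeights s) j h ≤ c) :
    lowestHeights s i = (s i).lo := by
  have hadm := admissibleHeights_lowestHeights hs hy₀
  have hv : max (s i).lo c ∈ Set.Icc (s i).lo (lowestHeights s i) :=
    ⟨le_max_left _ _, max_le (hadm.1 i).1 hc.le⟩
  have hlow := lowestHeights_le
    (hadm.update hs hv fun j h hji => (hchord j h hji).trans (le_max_right _ _)) i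
  rw [Function.update_self] at hlow
  refine le_antisymm ?_ (hadm.1 i).1
  rcases max_cases (s i).lo c with ⟨hmax, -⟩ | ⟨hmax, -⟩ <;> rw [hmax] at hlow
  · exact hlow
  · exact absurd hlow hc.not_ge

end HeightProfile

namespace UpperTransversal

variable {R : Finset VSeg} {k : ℕ} (U : UpperTransversal R k)

theorem pts_eq_segPoint (i : Fin k) : U.pts i = segPoint U.seg (fun i => (U.pts i).2) i :=
  Prod.ext (U.pt_mem i).1 rfl

theorem strictMono_segX : StrictMono fun i => (U.seg i).x := fun a b hab => by
  simpa [← (U.pt_mem a).1, ← (U.pt_mem b).1] using U.x_mono hab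

theorem admissibleHeights : AdmissibleHeights U.seg fun i => (U.pts i).2 := by
  refine ⟨fun i => (U.pt_mem i).2, fun j h => ?_⟩
  have hconc := U.concave j h
  rw [ge_iff_le, ptSlope_le_ptSlope_iff (U.x_mono (Fin.mk_lt_mk.mpr (by omega)))
    (U.x_mono (Fin.mk_lt_mk.mpr (by omega)))] at hconc
  simpa only [chordAt, ← pts_eq_segPoint, (U.pt_mem _).1] using hconc

def ofHeights {y : Fin k → ℝ} (hy : AdmissibleHeights U.seg y) : UpperTransversal R k where
  pts := segPoint U.seg y
  seg := U.seg
  seg_mem := U.seg_mem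
  seg_inj := U.seg_inj
  pt_mem i := ⟨rfl, hy.1 i⟩
  x_mono := U.strictMono_segX
  concave j h := by
    rw [ge_iff_le, ptSlope_le_ptSlope_iff (U.strictMono_segX (Fin.mk_lt_mk.mpr (by omega)))
      (U.strictMono_segX (Fin.mk_lt_mk.mpr (by omega)))]
    exact hy.2 j h

theorem ofHeights_pts_eq_bot {y : Fin k → ℝ} (hy : AdmissibleHeights U.seg y) {i : Fin k}
    (hi : y i = (U.seg i).lo) : ∃ s ∈ R, (U.ofHeights hy).pts i = s.bot :=
  ⟨U.seg i, U.seg_mem i, Prod.ext rfl hi⟩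

end UpperTransversal

/-- for any upper convex transversal `U` of a set `R` of vertical
segments in general position, there is an upper convex transversal `U'` visiting
exactly the same segments, whose leftmost vertex, rightmost vertex, and strictly
convex vertices all are bottom endpoints of segments of `R`. -/
theorem upper_transversal_canonical
    (R : Finset VSeg) (k : ℕ) (U : UpperTransversal R k) :
    ∃ U' : UpperTransversal R k,
      Set.range U'.seg = Set.range U.seg ∧
      (∀ h : 0 < k, ∃ s ∈ R, U'.pts ⟨0, h⟩ = s.bot) ∧
      (∀ h : 0 < k, ∃ s ∈ R, U'.pts ⟨k - 1, by omega⟩ = s.bot) ∧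
      (∀ i : ℕ, ∀ h0 : 0 < i, ∀ h1 : i + 1 < k,
        ¬ Collinear ℝ ({U'.pts ⟨i - 1, by omega⟩, U'.pts ⟨i, by omega⟩,
            U'.pts ⟨i + 1, h1⟩} : Set (ℝ × ℝ)) →
        ∃ s ∈ R, U'.pts ⟨i, by omega⟩ = s.bot) := by
  have hs := U.strictMono_segX.monotone
  have hadm := admissibleHeights_lowestHeights hs U.admissibleHeights
  have hend {i : Fin k} (hi : ∀ j (h : j + 2 < k), (⟨j + 1, by omega⟩ : Fin k) ≠ i) :
      ∃ s ∈ R, (U.ofHeights hadm).pts i = s.bot :=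
    U.ofHeights_pts_eq_bot hadm (lowestHeights_eq_lo hs U.admissibleHeights
      (sub_one_lt _ |>.trans_le (hadm.1 i).1) fun j h hji => absurd hji (hi j h))
  refine ⟨U.ofHeights hadm, rfl, fun _ => hend fun j _ hj => ?_, fun _ => hend fun j _ hj => ?_,
    fun i _ h1 hncol => ?_⟩
  · exact absurd (Fin.mk.inj_iff.mp hj) (by omega)
  · exact absurd (Fin.mk.inj_iff.mp hj) (by omega)
  obtain ⟨j, rfl⟩ : ∃ j, i = j + 1 := ⟨i - 1, by omega⟩
  simp only [Nat.add_sub_cancel] at hncol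
  have hslack : chordAt U.seg (lowestHeights U.seg) j h1 < lowestHeights U.seg ⟨j + 1, h1.le⟩ :=
    (hadm.2 j h1).lt_of_ne fun heq => hncol <| collinear_of_chordHeight_eq
      (U.strictMono_segX (Fin.mk_lt_mk.mpr (by omega))).ne heq
  refine U.ofHeights_pts_eq_bot hadm (lowestHeights_eq_lo hs U.admissibleHeights hslack ?_)
  intro j' _ hj
  obtain rfl : j' = j := by simpa using hj
  exact le_rfl
end

section
/- Let ℓ be the line {(x,y) ∈ ℝ² : l₁x + l₂y + l₃ = 0} with (l₁,l₂) ≠ (0,0), let A = (a_x, a_y) ∈ ℝ², and let P₁, P₂, Q : ℝ → ℝ be polynomial functions of degree at most 1. Define P₁′(τ) = −(a_y l₂ + l₃)·P₁(τ) + a_x·(l₂·P₂(τ) + l₃·Q(τ)), P₂′(τ) = a_y l₁·P₁(τ) − (a_x l₁ + l₃)·P₂(τ) + a_y l₃·Q(τ), and Q′(τ) = l₁·P₁(τ) + l₂·P₂(τ) − (a_x l₁ + a_y l₂)·Q(τ); these are again polynomial functions of τ of degree at most 1. Then for every τ ∈ ℝ with Q(τ) ≠ 0 and Q′(τ) ≠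 0, writing X(τ) = (P₁(τ)/Q(τ), P₂(τ)/Q(τ)), the point Y(τ) = (P₁′(τ)/Q′(τ), P₂′(τ)/Q′(τ)) lies on ℓ and lies on the line through X(τ) and A (in particular, if X(τ) ≠ A and the line through X(τ) and A is not parallel to ℓ, then Y(τ) is the unique intersection point of ℓ with the line through X(τ) and A). -/
/-! With `f p = l₁ p.1 + l₂ p.2 + l₃`, the point `Y` is `lineMap X A (f X / (f X - f A))`, the point
of the line `XA` at which `f` vanishes. In homogeneous coordinates `(P₁', P₂', Q')` is
`(l₁ P₁ + l₂ P₂ + l₃ Q) • (a_x, a_y, 1) - f A • (P₁, P₂, Q)`, so `f X - f A = Q' / Q ≠ 0`. -/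

theorem exists_affine_of_eq_linear_combination {R : Type*} [CommSemiring R] {f g h k : R → R}
    (hf : ∃ c d : R, ∀ τ, f τ = c * τ + d) (hg : ∃ c d : R, ∀ τ, g τ = c * τ + d)
    (hh : ∃ c d : R, ∀ τ, h τ = c * τ + d) (α β γ : R)
    (hk : ∀ τ, k τ = α * f τ + β * g τ + γ * h τ) :
    ∃ c d : R, ∀ τ, k τ = c * τ + d := by
  obtain ⟨c₁, d₁, hf⟩ := hf
  obtain ⟨c₂, d₂, hg⟩ := hg
  obtain ⟨c₃, d₃, hh⟩ := hh
  exact ⟨α * c₁ + β * c₂ + γ * c₃, α * d₁ + β * d₂ + γ * d₃,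
    fun τ => by rw [hk, hf, hg, hh]; ring⟩

namespace AffineMap

variable {k V P : Type*} [Field k] [AddCommGroup V] [Module k V] [AddTorsor V P]

theorem apply_lineMap_div_sub_eq_zero (f : P →ᵃ[k] k) {x a : P} (h : f x ≠ f a) :
    f (lineMap x a (f x / (f x - f a))) = 0 := by
  rw [apply_lineMap, lineMap_apply_ring']
  field_simp [sub_ne_zero.mpr h]
  ring

theorem collinear_insert_insert_lineMap (x a : P) (t : k) :
    Collinear k ({x, a, lineMap x a t} : Set P) :=
  collinear_triple_of_mem_affineSpan_pair (left_mem_affineSpan_pair k x a)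
    (right_mem_affineSpan_pair k x a) (lineMap_mem_affineSpan_pair t x a)

end AffineMap

def lineEquation (l₁ l₂ l₃ : ℝ) : ℝ × ℝ →ᵃ[ℝ] ℝ where
  toFun p := l₁ * p.1 + l₂ * p.2 + l₃
  linear := l₁ • LinearMap.fst ℝ ℝ ℝ + l₂ • LinearMap.snd ℝ ℝ ℝ
  map_vadd' p v := by simp only [vadd_eq_add, Prod.fst_add, Prod.snd_add, LinearMap.add_apply,
    LinearMap.smul_apply, LinearMap.fst_apply, LinearMap.snd_apply, smul_eq_mul]; ring

theorem lineEquation_apply (l₁ l₂ l₃ : ℝ) (p : ℝ × ℝ) :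
    lineEquation l₁ l₂ l₃ p = l₁ * p.1 + l₂ * p.2 + l₃ := rfl

theorem intersection_point_coordinates_linear_fractional_general
    (l₁ l₂ l₃ a_x a_y : ℝ)
    (P₁ P₂ Q : ℝ → ℝ)
    (hP₁ : ∃ c d : ℝ, ∀ τ, P₁ τ = c * τ + d)
    (hP₂ : ∃ c d : ℝ, ∀ τ, P₂ τ = c * τ + d)
    (hQ : ∃ c d : ℝ, ∀ τ, Q τ = c * τ + d) :
    let P₁' : ℝ → ℝ := fun τ => -(a_y * l₂ + l₃) * P₁ τ + a_x * (l₂ * P₂ τ + l₃ * Q τ)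
    let P₂' : ℝ → ℝ := fun τ => a_y * l₁ * P₁ τ - (a_x * l₁ + l₃) * P₂ τ + a_y * l₃ * Q τ
    let Q' : ℝ → ℝ := fun τ => l₁ * P₁ τ + l₂ * P₂ τ - (a_x * l₁ + a_y * l₂) * Q τ
    (∃ c d : ℝ, ∀ τ, P₁' τ = c * τ + d) ∧
    (∃ c d : ℝ, ∀ τ, P₂' τ = c * τ + d) ∧
    (∃ c d : ℝ, ∀ τ, Q' τ = c * τ + d) ∧
    ∀ τ : ℝ, Q τ ≠ 0 → Q' τ ≠ 0 →
      (l₁ * (P₁' τ / Q' τ) + l₂ * (P₂' τ / Q' τ) + l₃ = 0) ∧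
      Collinear ℝ ({(P₁ τ / Q τ, P₂ τ / Q τ), (a_x, a_y),
        (P₁' τ / Q' τ, P₂' τ / Q' τ)} : Set (ℝ × ℝ)) := by
  intro P₁' P₂' Q'
  refine ⟨exists_affine_of_eq_linear_combination hP₁ hP₂ hQ
      (-(a_y * l₂ + l₃)) (a_x * l₂) (a_x * l₃) fun τ => by simp only [P₁']; ring,
    exists_affine_of_eq_linear_combination hP₁ hP₂ hQ
      (a_y * l₁) (-(a_x * l₁ + l₃)) (a_y * l₃) fun τ => by simp only [P₂']; ring,
    exists_affine_of_eq_linear_combination hP₁ hP₂ hQ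
      l₁ l₂ (-(a_x * l₁ + a_y * l₂)) fun τ => by simp only [Q']; ring,
    fun τ hQτ hQ'τ => ?_⟩
  set f := lineEquation l₁ l₂ l₃
  set X : ℝ × ℝ := (P₁ τ / Q τ, P₂ τ / Q τ)
  have hfX_sub_fA : f X - f (a_x, a_y) = Q' τ / Q τ := by
    simp only [f, X, lineEquation_apply, Q']
    field_simp
    ring
  have hY : (P₁' τ / Q' τ, P₂' τ / Q' τ) = AffineMap.lineMap X (a_x, a_y)
      (f X / (f X - f (a_x, a_y))) := by
    rw [hfX_sub_fA, AffineMap.lineMap_apply_module', Prod.ext_iff]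
    simp only [f, X, lineEquation_apply, Prod.fst_add, Prod.snd_add, Prod.smul_fst,
      Prod.smul_snd, Prod.fst_sub, Prod.snd_sub, smul_eq_mul]
    constructor <;> field_simp <;> simp only [P₁', P₂', Q'] <;> ring
  have hne : f X ≠ f (a_x, a_y) := by
    rw [← sub_ne_zero, hfX_sub_fA]
    exact div_ne_zero hQ'τ hQτ
  have hY_mem : f (P₁' τ / Q' τ, P₂' τ / Q' τ) = 0 := hY ▸ f.apply_lineMap_div_sub_eq_zero hne
  exact ⟨hY_mem, hY ▸ AffineMap.collinear_insert_insert_lineMap _ _ _⟩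

/-- let `ℓ = {(x,y) | l₁x + l₂y + l₃ = 0}` with `(l₁,l₂) ≠ (0,0)`,
let `A = (a_x, a_y)`, and let `P₁, P₂, Q` be polynomial functions of degree at
most 1. With `P₁', P₂', Q'` as defined below (again polynomial of degree at most
1), for every `τ` with `Q τ ≠ 0` and `Q' τ ≠ 0`, the point
`Y = (P₁' τ / Q' τ, P₂' τ / Q' τ)` lies on `ℓ` and is collinear with
`X = (P₁ τ / Q τ, P₂ τ / Q τ)` and `A`. -/
theorem intersection_point_coordinates_linear_fractional
    (l₁ l₂ l₃ a_x a_y : ℝ) (hl : (l₁, l₂) ≠ ((0 : ℝ), (0 : ℝ)))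
    (P₁ P₂ Q : ℝ → ℝ)
    (hP₁ : ∃ c d : ℝ, ∀ τ, P₁ τ = c * τ + d)
    (hP₂ : ∃ c d : ℝ, ∀ τ, P₂ τ = c * τ + d)
    (hQ : ∃ c d : ℝ, ∀ τ, Q τ = c * τ + d) :
    let P₁' : ℝ → ℝ := fun τ => -(a_y * l₂ + l₃) * P₁ τ + a_x * (l₂ * P₂ τ + l₃ * Q τ)
    let P₂' : ℝ → ℝ := fun τ => a_y * l₁ * P₁ τ - (a_x * l₁ + l₃) * P₂ τ + a_y * l₃ * Q τ
    let Q' : ℝ → ℝ := fun τ => l₁ * P₁ τ + l₂ * P₂ τ - (a_x * l₁ + a_y * l₂) * Q τ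
    (∃ c d : ℝ, ∀ τ, P₁' τ = c * τ + d) ∧
    (∃ c d : ℝ, ∀ τ, P₂' τ = c * τ + d) ∧
    (∃ c d : ℝ, ∀ τ, Q' τ = c * τ + d) ∧
    ∀ τ : ℝ, Q τ ≠ 0 → Q' τ ≠ 0 →
      (l₁ * (P₁' τ / Q' τ) + l₂ * (P₂' τ / Q' τ) + l₃ = 0) ∧
      Collinear ℝ ({(P₁ τ / Q τ, P₂ τ / Q τ), (a_x, a_y),
        (P₁' τ / Q' τ, P₂' τ / Q' τ)} : Set (ℝ × ℝ)) :=
  intersection_point_coordinates_linear_fractional_general l₁ l₂ l₃ a_x a_y P₁ P₂ Q hP₁ hP₂ hQ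
end

section
/- Let m ≥ 1 be an integer and let x₀ ∈ (0,1). Then there exists a closed polygonal chain consisting of exactly 4m + 2 line segments such that: all vertices of the chain lie on the boundary of the rectangle [0, 2m] × [0, 1]; the point (x₀, 1) is a vertex of the chain; every segment of the chain has slope +1 or −1; and consecutive segments of the chain have opposite slopes (i.e., the chain reflects off the boundary of the rectangle at each vertex). -/
namespace CRC

/-- Vertex `k` of the reflecting chain. -/
noncomputable def P (m : ℕ) (x₀ : ℝ) (k : ℕ) : ℝ × ℝ :=
  if k < 2*m then (x₀ + k, if Even k then 1 else 0)
  else if k = 2*m then ((2*m : ℝ), 1 - x₀)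
  else if k ≤ 4*m then ((4*m : ℝ) + 1 - k - x₀, if Even k then 0 else 1)
  else (0, 1 - x₀)

variable {m : ℕ} {x₀ : ℝ}

lemma P1 {k : ℕ} (h : k < 2*m) : P m x₀ k = (x₀ + k, if Even k then 1 else 0) := by
  simp [P, h]

lemma P2 : P m x₀ (2*m) = ((2*m : ℝ), 1 - x₀) := by
  simp [P]

lemma P3 {k : ℕ} (h1 : 2*m < k) (h2 : k ≤ 4*m) :
    P m x₀ k = ((4*m : ℝ) + 1 - k - x₀, if Even k then 0 else 1) := by
  have n1 : ¬ (k < 2*m) := by omega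
  have n2 : ¬ (k = 2*m) := by omega
  simp [P, n1, n2, h2]

lemma P4 : P m x₀ (4*m+1) = (0, 1 - x₀) := by
  have n1 : ¬ (4*m+1 < 2*m) := by omega
  have n2 : ¬ (4*m+1 = 2*m) := by omega
  have n3 : ¬ (4*m+1 ≤ 4*m) := by omega
  simp [P, n1, n2, n3]

lemma Pinj (hm : 1 ≤ m) (h0 : 0 < x₀) (h1 : x₀ < 1) :
    ∀ a b : ℕ, a < b → b < 4*m+2 → P m x₀ a ≠ P m x₀ b := by
  intro a b hab hb h
  rcases lt_trichotomy a (2*m) with ha1 | ha2 | ha3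
  · rw [P1 ha1] at h
    rcases lt_trichotomy b (2*m) with hb1 | hb2 | hb3
    · rw [P1 hb1, Prod.mk.injEq] at h
      have hc : (a : ℝ) = b := by linarith [h.1]
      exact absurd (Nat.cast_inj.mp hc) (by omega)
    · subst hb2
      rw [P2, Prod.mk.injEq] at h
      have haR : (a : ℝ) + 1 ≤ 2*m := by exact_mod_cast ha1
      linarith [h.1]
    · rcases Nat.lt_or_ge b (4*m+1) with hb4 | hb5
      · rw [P3 hb3 (by omega), Prod.mk.injEq] at h
        have h2 : 2*x₀ = (4*m : ℝ) + 1 - a - b := by linarith [h.1]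
        have hlt' : a + b < 4*m+1 := by
          have : ((a+b : ℕ) : ℝ) < ((4*m+1 : ℕ) : ℝ) := by push_cast; linarith
          exact_mod_cast this
        have hgt' : 4*m < a + b + 1 := by
          have : ((4*m : ℕ) : ℝ) < ((a+b+1 : ℕ) : ℝ) := by push_cast; linarith
          exact_mod_cast this
        have hab4 : a + b = 4*m := by omega
        by_cases hEa : Even a <;> by_cases hEb : Even b
        · rw [if_pos hEa, if_pos hEb] at h; exact one_ne_zero h.2
        · rw [Nat.not_even_iff_odd] at hEb
          obtain ⟨r, hr⟩ := hEa; obtain ⟨s, hs⟩ := hEb; omega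
        · rw [Nat.not_even_iff_odd] at hEa
          obtain ⟨r, hr⟩ := hEb; obtain ⟨s, hs⟩ := hEa; omega
        · rw [if_neg hEa, if_neg hEb] at h; exact one_ne_zero h.2.symm
      · have hb6 : b = 4*m+1 := by omega
        subst hb6
        rw [P4, Prod.mk.injEq] at h
        have : (0:ℝ) ≤ a := Nat.cast_nonneg a
        linarith [h.1]
  · subst ha2
    rw [P2] at h
    rcases Nat.lt_or_ge b (4*m+1) with hb4 | hb5
    · rw [P3 hab (by omega), Prod.mk.injEq] at h
      have hbR : (2*m : ℝ) + 1 ≤ b := by exact_mod_cast (by omega : 2*m+1 ≤ b)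
      linarith [h.1]
    · have hb6 : b = 4*m+1 := by omega
      subst hb6
      rw [P4, Prod.mk.injEq] at h
      have : (1:ℝ) ≤ m := by exact_mod_cast hm
      linarith [h.1]
  · rcases Nat.lt_or_ge a (4*m+1) with ha4 | ha5
    · rw [P3 ha3 (by omega)] at h
      rcases Nat.lt_or_ge b (4*m+1) with hb4 | hb5
      · rw [P3 (by omega) (by omega), Prod.mk.injEq] at h
        have hc : (a : ℝ) = b := by linarith [h.1]
        exact absurd (Nat.cast_inj.mp hc) (by omega)
      · have hb6 : b = 4*m+1 := by omega
        subst hb6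
        rw [P4, Prod.mk.injEq] at h
        have haR : (a : ℝ) ≤ 4*m := by exact_mod_cast (by omega : a ≤ 4*m)
        linarith [h.1]
    · omega

lemma fr_eq :
    frontier (Set.Icc (((0 : ℝ), (0 : ℝ))) (((2 * m : ℝ), (1 : ℝ))))
      = (Set.Icc (0:ℝ) (2*m) ×ˢ ({0, 1} : Set ℝ))
        ∪ (({0, (2*m : ℝ)} : Set ℝ) ×ˢ Set.Icc (0:ℝ) 1) := by
  have h2m : (0:ℝ) ≤ 2*m := by positivity
  rw [Set.Icc_prod_eq, frontier_prod_eq, closure_Icc, closure_Icc,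
    frontier_Icc h2m, frontier_Icc (by norm_num : (0:ℝ) ≤ 1)]

lemma memA {x y : ℝ} (hx1 : 0 ≤ x) (hx2 : x ≤ 2*m) (hy : y = 0 ∨ y = 1) :
    (x, y) ∈ frontier (Set.Icc (((0 : ℝ), (0 : ℝ))) (((2 * m : ℝ), (1 : ℝ)))) := by
  rw [fr_eq]
  exact Or.inl ⟨⟨hx1, hx2⟩, by rcases hy with h | h <;> simp [h]⟩

lemma memB {x y : ℝ} (hx : x = 0 ∨ x = 2*m) (hy1 : 0 ≤ y) (hy2 : y ≤ 1) :
    (x, y) ∈ frontier (Set.Icc (((0 : ℝ), (0 : ℝ))) (((2 * m : ℝ), (1 : ℝ)))) := by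
  rw [fr_eq]
  exact Or.inr ⟨by rcases hx with h | h <;> simp [h], ⟨hy1, hy2⟩⟩

lemma Pfrontier (hm : 1 ≤ m) (h0 : 0 < x₀) (h1 : x₀ < 1) (k : ℕ) (hk : k < 4*m+2) :
    P m x₀ k ∈ frontier (Set.Icc (((0 : ℝ), (0 : ℝ))) (((2 * m : ℝ), (1 : ℝ)))) := by
  rcases lt_trichotomy k (2*m) with hk1 | hk2 | hk3
  · rw [P1 hk1]
    refine memA (by positivity) ?_ ?_
    · have : (k : ℝ) + 1 ≤ 2*m := by exact_mod_cast hk1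
      linarith
    · by_cases hE : Even k
      · rw [if_pos hE]; right; rfl
      · rw [if_neg hE]; left; rfl
  · subst hk2
    rw [P2]
    exact memB (Or.inr rfl) (by linarith) (by linarith)
  · rcases Nat.lt_or_ge k (4*m+1) with hk4 | hk5
    · rw [P3 hk3 (by omega)]
      have hub : (k : ℝ) ≤ 4*m := by exact_mod_cast (by omega : k ≤ 4*m)
      have hlb : (2*m : ℝ) + 1 ≤ k := by exact_mod_cast (by omega : 2*m+1 ≤ k)
      refine memA (by linarith) (by linarith) ?_
      by_cases hE : Even k
      · rw [if_pos hE]; left; rfl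
      · rw [if_neg hE]; right; rfl
    · have hk6 : k = 4*m+1 := by omega
      subst hk6
      rw [P4]
      exact memB (Or.inl rfl) (by linarith) (by linarith)

lemma Pslope (hm : 1 ≤ m) (h0 : 0 < x₀) (h1 : x₀ < 1) (k : ℕ) (hk : k < 4*m+2) :
    (P m x₀ ((k+1) % (4*m+2))).1 - (P m x₀ k).1 ≠ 0 ∧
    ((Even k ∧ (P m x₀ ((k+1) % (4*m+2))).2 - (P m x₀ k).2
        = -((P m x₀ ((k+1) % (4*m+2))).1 - (P m x₀ k).1)) ∨
     (¬ Even k ∧ (P m x₀ ((k+1) % (4*m+2))).2 - (P m x₀ k).2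
        = (P m x₀ ((k+1) % (4*m+2))).1 - (P m x₀ k).1)) := by
  rcases Nat.lt_or_ge k (4*m+1) with hklt | hkge
  · -- j = k+1
    have hmod : (k+1) % (4*m+2) = k+1 := Nat.mod_eq_of_lt (by omega)
    rw [hmod]
    rcases Nat.lt_or_ge (k+1) (2*m) with hc1 | hc1'
    · -- both in branch 1
      rw [P1 hc1, P1 (by omega : k < 2*m)]
      by_cases hE : Even k
      · have hE' : ¬ Even (k+1) := by simp [Nat.even_add_one, hE]
        rw [if_pos hE, if_neg hE']
        dsimp only
        push_cast
        exact ⟨by intro h; linarith, Or.inl ⟨hE, by ring⟩⟩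
      · have hE' : Even (k+1) := by simp [Nat.even_add_one, hE]
        rw [if_neg hE, if_pos hE']
        dsimp only
        push_cast
        exact ⟨by intro h; linarith, Or.inr ⟨hE, by ring⟩⟩
    · rcases Nat.lt_or_ge k (2*m) with hc2 | hc2'
      · -- k = 2m-1, j = 2m
        have hkeq : k + 1 = 2*m := by omega
        have hodd : ¬ Even k := by
          rw [Nat.not_even_iff_odd]; exact ⟨m - 1, by omega⟩
        rw [hkeq, P2, P1 hc2, if_neg hodd]
        have hkr : (k : ℝ) = 2*m - 1 := by
          have : (k : ℝ) + 1 = 2*m := by exact_mod_cast hkeq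
          linarith
        rw [hkr]
        dsimp only
        exact ⟨by intro h; linarith, Or.inr ⟨hodd, by ring⟩⟩
      · rcases Nat.eq_or_lt_of_le hc2' with hc3 | hc3'
        · -- k = 2m, j = 2m+1
          have hkeq : k = 2*m := hc3.symm
          subst hkeq
          have hE : Even (2*m) := ⟨m, by ring⟩
          have hoddj : ¬ Even (2*m+1) := by simp [Nat.even_add_one, hE]
          rw [P2, P3 (by omega) (by omega), if_neg hoddj]
          dsimp only
          push_cast
          exact ⟨by intro h; linarith, Or.inl ⟨hE, by ring⟩⟩
        · rcases Nat.lt_or_ge (k+1) (4*m+1) with hc4 | hc4'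
          · -- both in branch 3
            rw [P3 (by omega) (by omega), P3 hc3' (by omega)]
            by_cases hE : Even k
            · have hE' : ¬ Even (k+1) := by simp [Nat.even_add_one, hE]
              rw [if_pos hE, if_neg hE']
              dsimp only
              push_cast
              exact ⟨by intro h; linarith, Or.inl ⟨hE, by ring⟩⟩
            · have hE' : Even (k+1) := by simp [Nat.even_add_one, hE]
              rw [if_neg hE, if_pos hE']
              dsimp only
              push_cast
              exact ⟨by intro h; linarith, Or.inr ⟨hE, by ring⟩⟩
          · -- k = 4m, j = 4m+1
            have hkeq : k = 4*m := by omega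
            subst hkeq
            have hE : Even (4*m) := ⟨2*m, by ring⟩
            rw [P4, P3 (by omega) le_rfl, if_pos hE]
            dsimp only
            push_cast
            exact ⟨by intro h; linarith, Or.inl ⟨hE, by ring⟩⟩
  · -- k = 4m+1, j = 0
    have hkeq : k = 4*m+1 := by omega
    subst hkeq
    have hmod : (4*m+1+1) % (4*m+2) = 0 := by
      have h2 : 4*m+1+1 = 4*m+2 := rfl
      rw [h2, Nat.mod_self]
    rw [hmod, P4, P1 (by omega : 0 < 2*m), if_pos (Even.zero)]
    have hodd : ¬ Even (4*m+1) := by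
      simp [Nat.even_add_one, (⟨2*m, by ring⟩ : Even (4*m))]
    dsimp only
    push_cast
    exact ⟨by intro h; linarith, Or.inr ⟨hodd, by ring⟩⟩

end CRC

/-- for every integer `m ≥ 1` and every `x₀ ∈ (0,1)` there is a
closed polygonal chain of exactly `4m + 2` segments whose (distinct) vertices all
lie on the boundary of the rectangle `[0, 2m] × [0, 1]`, having `(x₀, 1)` as a
vertex, each segment of which has slope `+1` or `−1`, and in which consecutive
segments have opposite slopes. Vertices are indexed cyclically by
`Fin (4m + 2)`. -/
theorem closed_reflecting_chain_exists
    (m : ℕ) (hm : 1 ≤ m) (x₀ : ℝ) (hx : x₀ ∈ Set.Ioo (0 : ℝ) 1) :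
    ∃ p : Fin (4 * m + 2) → ℝ × ℝ,
      Function.Injective p ∧
      (∀ i, p i ∈ frontier (Set.Icc (((0 : ℝ), (0 : ℝ))) (((2 * m : ℝ), (1 : ℝ))))) ∧
      (x₀, (1 : ℝ)) ∈ Set.range p ∧
      (∀ i : Fin (4 * m + 2),
        let j : Fin (4 * m + 2) := ⟨(i.1 + 1) % (4 * m + 2), Nat.mod_lt _ (by omega)⟩
        (p j).1 - (p i).1 ≠ 0 ∧
        ((p j).2 - (p i).2 = (p j).1 - (p i).1 ∨
          (p j).2 - (p i).2 = -((p j).1 - (p i).1))) ∧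
      (∀ i : Fin (4 * m + 2),
        let j : Fin (4 * m + 2) := ⟨(i.1 + 1) % (4 * m + 2), Nat.mod_lt _ (by omega)⟩
        let k : Fin (4 * m + 2) := ⟨(i.1 + 2) % (4 * m + 2), Nat.mod_lt _ (by omega)⟩
        ((p j).2 - (p i).2 = (p j).1 - (p i).1 ∧
            (p k).2 - (p j).2 = -((p k).1 - (p j).1)) ∨
        ((p j).2 - (p i).2 = -((p j).1 - (p i).1) ∧
            (p k).2 - (p j).2 = (p k).1 - (p j).1)) := by
  obtain ⟨h0, h1⟩ := hx
  refine ⟨fun i => CRC.P m x₀ i.1, ?_, ?_, ?_, ?_, ?_⟩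
  · intro a b hab
    by_contra hne
    have hne' : a.1 ≠ b.1 := fun h => hne (Fin.ext h)
    rcases Nat.lt_or_ge a.1 b.1 with h | h
    · exact CRC.Pinj hm h0 h1 a.1 b.1 h b.2 hab
    · exact CRC.Pinj hm h0 h1 b.1 a.1 (by omega) a.2 hab.symm
  · exact fun i => CRC.Pfrontier hm h0 h1 i.1 i.2
  · refine ⟨⟨0, by omega⟩, ?_⟩
    show CRC.P m x₀ 0 = (x₀, 1)
    rw [CRC.P1 (by omega : 0 < 2*m)]
    norm_num
  · intro i
    obtain ⟨hne, hsl⟩ := CRC.Pslope hm h0 h1 i.1 i.2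
    refine ⟨hne, ?_⟩
    rcases hsl with ⟨_, h⟩ | ⟨_, h⟩
    · exact Or.inr h
    · exact Or.inl h
  · intro i
    obtain ⟨_, hsl1⟩ := CRC.Pslope hm h0 h1 i.1 i.2
    have hj : (i.1 + 1) % (4*m+2) < 4*m+2 := Nat.mod_lt _ (by omega)
    obtain ⟨_, hsl2⟩ := CRC.Pslope hm h0 h1 ((i.1 + 1) % (4*m+2)) hj
    have hmod : ((i.1 + 1) % (4*m+2) + 1) % (4*m+2) = (i.1 + 2) % (4*m+2) := by
      rw [Nat.mod_add_mod]
    rw [hmod] at hsl2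
    have hpar : Even i.1 ↔ ¬ Even ((i.1 + 1) % (4*m+2)) := by
      rcases Nat.lt_or_ge (i.1 + 1) (4*m+2) with h | h
      · rw [Nat.mod_eq_of_lt h, Nat.even_add_one]
        tauto
      · have hilt := i.isLt
        have hi : i.1 = 4*m+1 := by omega
        rw [hi]
        have h2 : (4*m+1+1) % (4*m+2) = 0 := by
          have h3 : 4*m+1+1 = 4*m+2 := rfl
          rw [h3, Nat.mod_self]
        rw [h2]
        simp only [Even.zero, not_true, iff_false, Nat.even_iff]
        omega
    rcases hsl1 with ⟨hE1, e1⟩ | ⟨hE1, e1⟩ <;> rcases hsl2 with ⟨hE2, e2⟩ | ⟨hE2, e2⟩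
    · exact absurd hE2 (hpar.mp hE1)
    · exact Or.inr ⟨e1, e2⟩
    · exact Or.inl ⟨e1, e2⟩
    · exact absurd (hpar.mpr hE2) hE1
end
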